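/- arXiv:1911.08336 — 8 statements merged into one kernel-verified Lean document; each statement's English description precedes it below -/
import Mathlib

section
/- Let H be a real inner product space, let L : H → H be a symmetric linear map (⟪L x, y⟫ = ⟪x, L y⟫ for all x, y), let G : H → H be a linear map, and let δt > 0. Suppose φ⁰, φ¹, μ, w ∈ H and η, a⁰, a¹ ∈ ℝ satisfy the Crank–Nicolson Lagrange-multiplier scheme: (i) φ¹ − φ⁰ = −δt • G μ; (ii) μ = L(½(φ¹ + φ⁰)) + η • w; (iii) a¹ − a⁰ = η · ⟪w, φ¹ − φ⁰⟫. Then the discrete energy law holds: (½⟪L φ¹, φ¹⟫ + a¹) − (½⟪L φ⁰, φ⁰⟫ + a⁰) = −δt · ⟪G μ, μ⟫. -/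
open scoped RealInnerProductSpace

/-
Pairing the chemical potential μ with the increment φ¹ − φ⁰ computes the same number in two ways.
By (i) it is −δt ⟪G μ, μ⟫. By (ii), the symmetry of L turns ½⟪L(φ¹ + φ⁰), φ¹ − φ⁰⟫ into the
difference of the quadratic energies, and (iii) turns η ⟪w, φ¹ − φ⁰⟫ into a¹ − a⁰.
-/

theorem LinearMap.IsSymmetric.real_inner_map_add_sub {H : Type*} [NormedAddCommGroup H]
    [InnerProductSpace ℝ H] {L : H →ₗ[ℝ] H} (hL : L.IsSymmetric) (x y : H) :
    ⟪L (x + y), x - y⟫ = ⟪L x, x⟫ - ⟪L y, y⟫ := by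
  have hcross : ⟪L y, x⟫ = ⟪L x, y⟫ := by rw [hL, real_inner_comm]
  rw [map_add, inner_add_left, inner_sub_right, inner_sub_right, hcross]
  ring

theorem cn_lagrange_energy_law_general
    {H : Type*} [NormedAddCommGroup H] [InnerProductSpace ℝ H]
    (L G : H →ₗ[ℝ] H) (hL : ∀ x y : H, ⟪L x, y⟫ = ⟪x, L y⟫)
    (δt : ℝ)
    (φ0 φ1 μ w : H) (η a0 a1 : ℝ)
    (h1 : φ1 - φ0 = -(δt • G μ))
    (h2 : μ = L ((1 / 2 : ℝ) • (φ1 + φ0)) + η • w)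
    (h3 : a1 - a0 = η * ⟪w, φ1 - φ0⟫) :
    ((1 / 2 : ℝ) * ⟪L φ1, φ1⟫ + a1) - ((1 / 2 : ℝ) * ⟪L φ0, φ0⟫ + a0)
      = -(δt * ⟪G μ, μ⟫) := by
  have hsymm : L.IsSymmetric := hL
  have dissipation : ⟪μ, φ1 - φ0⟫ = -(δt * ⟪G μ, μ⟫) := by
    rw [h1, inner_neg_right, real_inner_smul_right, real_inner_comm]
  have energy_change :
      ⟪μ, φ1 - φ0⟫ = (1 / 2 : ℝ) * (⟪L φ1, φ1⟫ - ⟪L φ0, φ0⟫) + (a1 - a0) := by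
    rw [h3, h2, inner_add_left, map_smul, real_inner_smul_left, real_inner_smul_left,
      hsymm.real_inner_map_add_sub]
  linarith

/-- Discrete energy law for the Crank–Nicolson Lagrange-multiplier scheme. -/
theorem cn_lagrange_energy_law
    {H : Type*} [NormedAddCommGroup H] [InnerProductSpace ℝ H]
    (L G : H →ₗ[ℝ] H) (hL : ∀ x y : H, ⟪L x, y⟫ = ⟪x, L y⟫)
    (δt : ℝ) (hδt : 0 < δt)
    (φ0 φ1 μ w : H) (η a0 a1 : ℝ)
    (h1 : φ1 - φ0 = -(δt • G μ))
    (h2 : μ = L ((1 / 2 : ℝ) • (φ1 + φ0)) + η • w)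
    (h3 : a1 - a0 = η * ⟪w, φ1 - φ0⟫) :
    ((1 / 2 : ℝ) * ⟪L φ1, φ1⟫ + a1) - ((1 / 2 : ℝ) * ⟪L φ0, φ0⟫ + a0)
      = -(δt * ⟪G μ, μ⟫) :=
  cn_lagrange_energy_law_general L G hL δt φ0 φ1 μ w η a0 a1 h1 h2 h3
end

section
/- Let H be a real inner product space, let L : H → H be a symmetric linear map (⟪L x, y⟫ = ⟪x, L y⟫ for all x, y), let G : H → H be a linear map, and let δt > 0. Suppose φ⁰, φ¹, φ², μ, w ∈ H and η, a⁰, a¹, a² ∈ ℝ satisfy the BDF2 Lagrange-multiplier scheme: (i) 3φ² − 4φ¹ + φ⁰ = −2δt • G μ; (ii) μ = L φ² + η • w; (iii) 3a² − 4a¹ + a⁰ = η · ⟪w, 3φ² − 4φ¹ + φ⁰⟫. Define the modified energy Ẽ(φ, ψ, a, a′) = ¼(⟪L φ, φ⟫ + ⟪L(2φ − ψ), 2φ − ψ⟫) + ½(3a − a′). Then Ẽ(φ², φ¹, a², a¹) − Ẽ(φ¹, φ⁰, a¹, a⁰) = −δt · ⟪G μ, μ⟫ − ¼ ⟪L(φ²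 − 2φ¹ + φ⁰), φ² − 2φ¹ + φ⁰⟫. -/
open scoped RealInnerProductSpace

/-- The BDF2 analogue of `2 (a - b) a = a² - b² + (a - b)²`. -/
theorem LinearMap.IsSymmetric.two_inner_bdf2 {H : Type*} [NormedAddCommGroup H]
    [InnerProductSpace ℝ H] {L : H →ₗ[ℝ] H} (hL : L.IsSymmetric) (u v z : H) :
    2 * ⟪L u, (3 : ℝ) • u - (4 : ℝ) • v + z⟫
      = (⟪L u, u⟫ + ⟪L ((2 : ℝ) • u - v), (2 : ℝ) • u - v⟫)
        - (⟪L v, v⟫ + ⟪L ((2 : ℝ) • v - z), (2 : ℝ) • v - z⟫)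
        + ⟪L (u - (2 : ℝ) • v + z), u - (2 : ℝ) • v + z⟫ := by
  have symm : ∀ x y : H, ⟪L y, x⟫ = ⟪L x, y⟫ := fun x y => by
    rw [hL, real_inner_comm]
  simp only [map_add, map_sub, map_smul, inner_add_left, inner_add_right, inner_sub_left,
    inner_sub_right, real_inner_smul_left, real_inner_smul_right, symm u v, symm u z, symm v z]
  ring

theorem bdf2_lagrange_energy_law_general
    {H : Type*} [NormedAddCommGroup H] [InnerProductSpace ℝ H]
    (L G : H →ₗ[ℝ] H) (hL : ∀ x y : H, ⟪L x, y⟫ = ⟪x, L y⟫)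
    (δt : ℝ)
    (φ0 φ1 φ2 μ w : H) (η a0 a1 a2 : ℝ)
    (h1 : (3 : ℝ) • φ2 - (4 : ℝ) • φ1 + φ0 = -((2 * δt) • G μ))
    (h2 : μ = L φ2 + η • w)
    (h3 : 3 * a2 - 4 * a1 + a0 = η * ⟪w, (3 : ℝ) • φ2 - (4 : ℝ) • φ1 + φ0⟫)
    (Etilde : H → H → ℝ → ℝ → ℝ)
    (hE : ∀ (φ ψ : H) (a a' : ℝ), Etilde φ ψ a a'
      = (1 / 4 : ℝ) * (⟪L φ, φ⟫ + ⟪L ((2 : ℝ) • φ - ψ), (2 : ℝ) • φ - ψ⟫)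
        + (1 / 2 : ℝ) * (3 * a - a')) :
    Etilde φ2 φ1 a2 a1 - Etilde φ1 φ0 a1 a0
      = -(δt * ⟪G μ, μ⟫)
        - (1 / 4 : ℝ) * ⟪L (φ2 - (2 : ℝ) • φ1 + φ0), φ2 - (2 : ℝ) • φ1 + φ0⟫ := by
  set D := (3 : ℝ) • φ2 - (4 : ℝ) • φ1 + φ0
  have dissipation : ⟪μ, D⟫ = -(2 * δt) * ⟪G μ, μ⟫ := by
    rw [h1, inner_neg_right, real_inner_smul_right, real_inner_comm]
    ring
  have splitting : ⟪μ, D⟫ = ⟪L φ2, D⟫ + (3 * a2 - 4 * a1 + a0) := by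
    rw [h3, h2, inner_add_left, real_inner_smul_left]
  have energy_increment := LinearMap.IsSymmetric.two_inner_bdf2 hL φ2 φ1 φ0
  rw [hE, hE]
  linarith

/-- Discrete energy law for the BDF2 Lagrange-multiplier scheme. -/
theorem bdf2_lagrange_energy_law
    {H : Type*} [NormedAddCommGroup H] [InnerProductSpace ℝ H]
    (L G : H →ₗ[ℝ] H) (hL : ∀ x y : H, ⟪L x, y⟫ = ⟪x, L y⟫)
    (δt : ℝ) (hδt : 0 < δt)
    (φ0 φ1 φ2 μ w : H) (η a0 a1 a2 : ℝ)
    (h1 : (3 : ℝ) • φ2 - (4 : ℝ) • φ1 + φ0 = -((2 * δt) • G μ))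
    (h2 : μ = L φ2 + η • w)
    (h3 : 3 * a2 - 4 * a1 + a0 = η * ⟪w, (3 : ℝ) • φ2 - (4 : ℝ) • φ1 + φ0⟫)
    (Etilde : H → H → ℝ → ℝ → ℝ)
    (hE : ∀ (φ ψ : H) (a a' : ℝ), Etilde φ ψ a a'
      = (1 / 4 : ℝ) * (⟪L φ, φ⟫ + ⟪L ((2 : ℝ) • φ - ψ), (2 : ℝ) • φ - ψ⟫)
        + (1 / 2 : ℝ) * (3 * a - a')) :
    Etilde φ2 φ1 a2 a1 - Etilde φ1 φ0 a1 a0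
      = -(δt * ⟪G μ, μ⟫)
        - (1 / 4 : ℝ) * ⟪L (φ2 - (2 : ℝ) • φ1 + φ0), φ2 - (2 : ℝ) • φ1 + φ0⟫ :=
  bdf2_lagrange_energy_law_general L G hL δt φ0 φ1 φ2 μ w η a0 a1 a2 h1 h2 h3 Etilde hE
end

section
/- Let H be a real inner product space, let L : H → H be a continuous symmetric linear map (⟪L x, y⟫ = ⟪x, L y⟫ for all x, y), and let G : H → H be a linear map. Suppose φ : ℝ → H and r : ℝ → ℝ are differentiable, w : ℝ → H and η : ℝ → ℝ are arbitrary functions, and μ : ℝ → H, and for every t: (i) φ′(t) = −G(μ(t)); (ii) μ(t) = L(φ(t)) + η(t) • w(t); (iii) r′(t) = η(t) · ⟪w(t), φ′(t)⟫. Then the energy E(t) = ½⟪L(φ(t)), φ(t)⟫ + r(t) is differentiable with E′(t) = −⟪G(μ(t)), μ(t)⟫ for every t. -/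
/-!
Writing `E = ½⟪Lφ, φ⟫ + r`, symmetry of `L` gives `E' = ⟪Lφ, φ'⟫ + r'`, and the constraint on
`r'` turns this into `⟪Lφ + η w, φ'⟫ = ⟪μ, φ'⟫ = -⟪Gμ, μ⟫`.
-/

open scoped RealInnerProductSpace

theorem HasDerivAt.half_inner_apply_self {H : Type*} [NormedAddCommGroup H]
    [InnerProductSpace ℝ H] {L : H →L[ℝ] H} (hL : (L : H →ₗ[ℝ] H).IsSymmetric)
    {φ : ℝ → H} {φ' : H} {t : ℝ} (hφ : HasDerivAt φ φ' t) :
    HasDerivAt (fun s => (1 / 2 : ℝ) * ⟪L (φ s), φ s⟫) ⟪L (φ t), φ'⟫ t := by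
  have hLφ : HasDerivAt (fun s => L (φ s)) (L φ') t := L.hasFDerivAt.comp_hasDerivAt t hφ
  refine ((hLφ.inner ℝ hφ).const_mul (1 / 2 : ℝ)).congr_deriv ?_
  have hsymm : ⟪L φ', φ t⟫ = ⟪L (φ t), φ'⟫ := (hL φ' (φ t)).trans (real_inner_comm _ _)
  rw [hsymm]
  ring

/-- Energy dissipation law for the continuous Lagrange-multiplier reformulation of a
gradient flow. -/
theorem continuous_lagrange_energy_law
    {H : Type*} [NormedAddCommGroup H] [InnerProductSpace ℝ H]
    (L : H →L[ℝ] H) (hL : ∀ x y : H, ⟪L x, y⟫ = ⟪x, L y⟫)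
    (G : H →ₗ[ℝ] H)
    (φ : ℝ → H) (r : ℝ → ℝ) (w : ℝ → H) (η : ℝ → ℝ) (μ : ℝ → H)
    (hφ : Differentiable ℝ φ) (hr : Differentiable ℝ r)
    (h1 : ∀ t, deriv φ t = -(G (μ t)))
    (h2 : ∀ t, μ t = L (φ t) + η t • w t)
    (h3 : ∀ t, deriv r t = η t * ⟪w t, deriv φ t⟫) :
    ∀ t, HasDerivAt (fun s => (1 / 2 : ℝ) * ⟪L (φ s), φ s⟫ + r s)
      (-⟪G (μ t), μ t⟫) t := by
  intro t
  have hE : ⟪L (φ t), deriv φ t⟫ + deriv r t = -⟪G (μ t), μ t⟫ := by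
    rw [h3, ← real_inner_smul_left, ← inner_add_left, ← h2, h1, inner_neg_right,
      real_inner_comm]
  exact hE ▸ ((hφ t).hasDerivAt.half_inner_apply_self hL).add (hr t).hasDerivAt
end

section
/- Let H be a real inner product space and let D, N : H → H be symmetric linear maps (⟪D x, y⟫ = ⟪x, D y⟫ and ⟪N x, y⟫ = ⟪x, N y⟫ for all x, y) that are positive semidefinite (⟪D x, x⟫ ≥ 0 and ⟪N x, x⟫ ≥ 0 for all x). Let δt > 0, M_u, M_v > 0, ε_u, ε_v ∈ ℝ, σ ≥ 0, and c ∈ H. Suppose u⁰, u¹, u², v⁰, v¹, v², μ_u, μ_v, w_u, w_v ∈ H and η, W⁰, W¹, W² ∈ ℝ satisfy: (i) 3u² − 4u¹ + u⁰ = −2δt M_u • D μ_u; (ii) μ_u = ε_u² • D u² + η • w_u; (iii) 3v² − 4v¹ + v⁰ = −2δt M_v • D μ_v; (iv) μ_v = ε_v² • D v² + η • w_v + σ • N(v² − c); (v) 3W² − 4W¹ + W⁰ = η (⟪w_u, 3u² − 4u¹ + u⁰⟫ + ⟪w_v, 3v² − 4v¹ + v⁰⟫). For indices (a,b) ∈ {(2,1),(1,0)}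 define the discrete energy E^{a,b} = (ε_u²/4)(⟪D u^a, u^a⟫ + ⟪D(2u^a − u^b), 2u^a − u^b⟫) + (ε_v²/4)(⟪D v^a, v^a⟫ + ⟪D(2v^a − v^b), 2v^a − v^b⟫) + (σ/4)(⟪N(v^a − c), v^a − c⟫ + ⟪N(2v^a − v^b − c), 2v^a − v^b − c⟫) + ½(3W^a − W^b). Then E^{2,1} − E^{1,0} ≤ −δt (M_u ⟪D μ_u, μ_u⟫ + M_v ⟪D μ_v, μ_v⟫). -/
/-!
Pairing the first scheme equation with `μu` and the third with `μv`, the left-hand sides become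
`-2 δt M ⟪D μ, μ⟫`. On the right, each symmetric positive semidefinite quadratic form `T` obeys the
BDF2 telescoping identity
`2 ⟪T a, 3a - 4b + d⟫ = G(a, b) - G(b, d) + ⟪T (a - 2b + d), a - 2b + d⟫`
with `G(a, b) = ⟪T a, a⟫ + ⟪T (2a - b), 2a - b⟫`, and the Lagrange multiplier equation turns the
`η`-terms into the increment `3W² - 4W¹ + W⁰`. Summing, the energy decreases by the dissipation
plus the nonnegative second-difference terms `⟪T (a - 2b + d), a - 2b + d⟫`.
-/

open scoped RealInnerProductSpace

section BDF2

variable {H : Type*} [NormedAddCommGroup H] [InnerProductSpace ℝ H]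

theorem two_inner_bdf2_eq (T : H →ₗ[ℝ] H) (hT : ∀ x y : H, ⟪T x, y⟫ = ⟪x, T y⟫) (a b d : H) :
    2 * ⟪T a, (3 : ℝ) • a - (4 : ℝ) • b + d⟫
      = (⟪T a, a⟫ + ⟪T ((2 : ℝ) • a - b), (2 : ℝ) • a - b⟫)
        - (⟪T b, b⟫ + ⟪T ((2 : ℝ) • b - d), (2 : ℝ) • b - d⟫)
        + ⟪T (a - (2 : ℝ) • b + d), a - (2 : ℝ) • b + d⟫ := by
  have hT' (x y : H) : ⟪T x, y⟫ = ⟪T y, x⟫ := (hT x y).trans (real_inner_comm _ _)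
  simp only [map_add, map_sub, map_smul, inner_add_left, inner_add_right,
    inner_sub_left, inner_sub_right, real_inner_smul_left, real_inner_smul_right]
  linear_combination (-4 : ℝ) * hT' a b + hT' a d

theorem two_inner_sub_bdf2_eq (T : H →ₗ[ℝ] H) (hT : ∀ x y : H, ⟪T x, y⟫ = ⟪x, T y⟫)
    (a b d c : H) :
    2 * ⟪T (a - c), (3 : ℝ) • a - (4 : ℝ) • b + d⟫
      = (⟪T (a - c), a - c⟫ + ⟪T ((2 : ℝ) • a - b - c), (2 : ℝ) • a - b - c⟫)
        - (⟪T (b - c), b - c⟫ + ⟪T ((2 : ℝ) • b - d - c), (2 : ℝ) • b - d - c⟫)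
        + ⟪T (a - (2 : ℝ) • b + d), a - (2 : ℝ) • b + d⟫ := by
  have key := two_inner_bdf2_eq T hT (a - c) (b - c) (d - c)
  rwa [show (3 : ℝ) • (a - c) - (4 : ℝ) • (b - c) + (d - c) = (3 : ℝ) • a - (4 : ℝ) • b + d by
      module,
    show (2 : ℝ) • (a - c) - (b - c) = (2 : ℝ) • a - b - c by module,
    show (2 : ℝ) • (b - c) - (d - c) = (2 : ℝ) • b - d - c by module,
    show a - c - (2 : ℝ) • (b - c) + (d - c) = a - (2 : ℝ) • b + d by module] at key

theorem inner_eq_neg_mul_of_eq_neg_smul (D : H →ₗ[ℝ] H) {μ x : H} {k : ℝ}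
    (h : x = -(k • D μ)) : ⟪μ, x⟫ = -(k * ⟪D μ, μ⟫) := by
  rw [h, inner_neg_right, real_inner_smul_right, real_inner_comm]

end BDF2

theorem coupled_bdf2_energy_stability_general
    {H : Type*} [NormedAddCommGroup H] [InnerProductSpace ℝ H]
    (D N : H →ₗ[ℝ] H)
    (hD : ∀ x y : H, ⟪D x, y⟫ = ⟪x, D y⟫) (hN : ∀ x y : H, ⟪N x, y⟫ = ⟪x, N y⟫)
    (hDpos : ∀ x : H, 0 ≤ ⟪D x, x⟫) (hNpos : ∀ x : H, 0 ≤ ⟪N x, x⟫)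
    (δt Mu Mv εu εv σ : ℝ) (hσ : 0 ≤ σ)
    (c : H)
    (u0 u1 u2 v0 v1 v2 μu μv wu wv : H) (η W0 W1 W2 : ℝ)
    (h1 : (3 : ℝ) • u2 - (4 : ℝ) • u1 + u0 = -((2 * δt * Mu) • D μu))
    (h2 : μu = εu ^ 2 • D u2 + η • wu)
    (h3 : (3 : ℝ) • v2 - (4 : ℝ) • v1 + v0 = -((2 * δt * Mv) • D μv))
    (h4 : μv = εv ^ 2 • D v2 + η • wv + σ • N (v2 - c))
    (h5 : 3 * W2 - 4 * W1 + W0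
      = η * (⟪wu, (3 : ℝ) • u2 - (4 : ℝ) • u1 + u0⟫
           + ⟪wv, (3 : ℝ) • v2 - (4 : ℝ) • v1 + v0⟫))
    (E : H → H → H → H → ℝ → ℝ → ℝ)
    (hE : ∀ (ua ub va vb : H) (Wa Wb : ℝ), E ua ub va vb Wa Wb
      = εu ^ 2 / 4 * (⟪D ua, ua⟫ + ⟪D ((2 : ℝ) • ua - ub), (2 : ℝ) • ua - ub⟫)
        + εv ^ 2 / 4 * (⟪D va, va⟫ + ⟪D ((2 : ℝ) • va - vb), (2 : ℝ) • va - vb⟫)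
        + σ / 4 * (⟪N (va - c), va - c⟫
                 + ⟪N ((2 : ℝ) • va - vb - c), (2 : ℝ) • va - vb - c⟫)
        + (1 / 2 : ℝ) * (3 * Wa - Wb)) :
    E u2 u1 v2 v1 W2 W1 - E u1 u0 v1 v0 W1 W0
      ≤ -(δt * (Mu * ⟪D μu, μu⟫ + Mv * ⟪D μv, μv⟫)) := by
  set Δu := (3 : ℝ) • u2 - (4 : ℝ) • u1 + u0
  set Δv := (3 : ℝ) • v2 - (4 : ℝ) • v1 + v0
  have pairing_u : εu ^ 2 * ⟪D u2, Δu⟫ + η * ⟪wu, Δu⟫ = -(2 * δt * Mu * ⟪D μu, μu⟫) := by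
    rw [← inner_eq_neg_mul_of_eq_neg_smul D h1, h2, inner_add_left, real_inner_smul_left,
      real_inner_smul_left]
  have pairing_v : εv ^ 2 * ⟪D v2, Δv⟫ + η * ⟪wv, Δv⟫ + σ * ⟪N (v2 - c), Δv⟫
      = -(2 * δt * Mv * ⟪D μv, μv⟫) := by
    rw [← inner_eq_neg_mul_of_eq_neg_smul D h3, h4, inner_add_left, inner_add_left,
      real_inner_smul_left, real_inner_smul_left, real_inner_smul_left]
  have num_dissipation_u := mul_nonneg (sq_nonneg εu) (hDpos (u2 - (2 : ℝ) • u1 + u0))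
  have num_dissipation_v := mul_nonneg (sq_nonneg εv) (hDpos (v2 - (2 : ℝ) • v1 + v0))
  have num_dissipation_n := mul_nonneg hσ (hNpos (v2 - (2 : ℝ) • v1 + v0))
  rw [hE, hE]
  linear_combination (-εu ^ 2 / 4) * two_inner_bdf2_eq D hD u2 u1 u0
    + (-εv ^ 2 / 4) * two_inner_bdf2_eq D hD v2 v1 v0
    + (-σ / 4) * two_inner_sub_bdf2_eq N hN v2 v1 v0 c
    + (1 / 2) * (pairing_u + pairing_v + h5) + (1 / 4) * (num_dissipation_u + num_dissipation_v + num_dissipation_n)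

/-- Unconditional energy stability of the BDF2 Lagrange-multiplier scheme for the
coupled non-local Cahn–Hilliard (block copolymer) system. -/
theorem coupled_bdf2_energy_stability
    {H : Type*} [NormedAddCommGroup H] [InnerProductSpace ℝ H]
    (D N : H →ₗ[ℝ] H)
    (hD : ∀ x y : H, ⟪D x, y⟫ = ⟪x, D y⟫) (hN : ∀ x y : H, ⟪N x, y⟫ = ⟪x, N y⟫)
    (hDpos : ∀ x : H, 0 ≤ ⟪D x, x⟫) (hNpos : ∀ x : H, 0 ≤ ⟪N x, x⟫)
    (δt Mu Mv εu εv σ : ℝ) (hδt : 0 < δt) (hMu : 0 < Mu) (hMv : 0 < Mv) (hσ : 0 ≤ σ)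
    (c : H)
    (u0 u1 u2 v0 v1 v2 μu μv wu wv : H) (η W0 W1 W2 : ℝ)
    (h1 : (3 : ℝ) • u2 - (4 : ℝ) • u1 + u0 = -((2 * δt * Mu) • D μu))
    (h2 : μu = εu ^ 2 • D u2 + η • wu)
    (h3 : (3 : ℝ) • v2 - (4 : ℝ) • v1 + v0 = -((2 * δt * Mv) • D μv))
    (h4 : μv = εv ^ 2 • D v2 + η • wv + σ • N (v2 - c))
    (h5 : 3 * W2 - 4 * W1 + W0
      = η * (⟪wu, (3 : ℝ) • u2 - (4 : ℝ) • u1 + u0⟫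
           + ⟪wv, (3 : ℝ) • v2 - (4 : ℝ) • v1 + v0⟫))
    (E : H → H → H → H → ℝ → ℝ → ℝ)
    (hE : ∀ (ua ub va vb : H) (Wa Wb : ℝ), E ua ub va vb Wa Wb
      = εu ^ 2 / 4 * (⟪D ua, ua⟫ + ⟪D ((2 : ℝ) • ua - ub), (2 : ℝ) • ua - ub⟫)
        + εv ^ 2 / 4 * (⟪D va, va⟫ + ⟪D ((2 : ℝ) • va - vb), (2 : ℝ) • va - vb⟫)
        + σ / 4 * (⟪N (va - c), va - c⟫
                 + ⟪N ((2 : ℝ) • va - vb - c), (2 : ℝ) • va - vb - c⟫)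
        + (1 / 2 : ℝ) * (3 * Wa - Wb)) :
    E u2 u1 v2 v1 W2 W1 - E u1 u0 v1 v0 W1 W0
      ≤ -(δt * (Mu * ⟪D μu, μu⟫ + Mv * ⟪D μv, μv⟫)) :=
  coupled_bdf2_energy_stability_general D N hD hN hDpos hNpos δt Mu Mv εu εv σ hσ c u0 u1 u2 v0 v1
    v2 μu μv wu wv η W0 W1 W2 h1 h2 h3 h4 h5 E hE
end

section
/- Let H be a real inner product space and let D, N : H → H be symmetric linear maps (⟪D x, y⟫ = ⟪x, D y⟫ and ⟪N x, y⟫ = ⟪x, N y⟫ for all x, y) that are positive semidefinite (⟪D x, x⟫ ≥ 0 and ⟪N x, x⟫ ≥ 0 for all x). Let δt > 0, M_u, M_v > 0, ε_u, ε_v ∈ ℝ, σ ≥ 0, S_u, S_v ≥ 0, and c ∈ H. Suppose u⁰, u¹, u², v⁰, v¹, v², μ_u, μ_v, w_u, w_v ∈ H and η, W̃⁰, W̃¹, W̃² ∈ ℝ satisfy the stabilized BDF2 scheme: (i) 3u² − 4u¹ + u⁰ = −2δt M_u • D μ_u; (ii) μ_u = ε_u² • D u² + S_u • u² + η • w_u;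 (iii) 3v² − 4v¹ + v⁰ = −2δt M_v • D μ_v; (iv) μ_v = ε_v² • D v² + S_v • v² + η • w_v + σ • N(v² − c); (v) 3W̃² − 4W̃¹ + W̃⁰ = η (⟪w_u, 3u² − 4u¹ + u⁰⟫ + ⟪w_v, 3v² − 4v¹ + v⁰⟫). For indices (a,b) ∈ {(2,1),(1,0)} define E^{a,b} = (ε_u²/4)(⟪D u^a, u^a⟫ + ⟪D(2u^a − u^b), 2u^a − u^b⟫) + (S_u/4)(‖u^a‖² + ‖2u^a − u^b‖²) + (ε_v²/4)(⟪D v^a, v^a⟫ + ⟪D(2v^a − v^b), 2v^a − v^b⟫) + (S_v/4)(‖v^a‖² + ‖2v^a − v^b‖²) + (σ/4)(⟪N(v^a − c), v^a − c⟫ + ⟪N(2v^a − v^b − c), 2v^a − v^b − c⟫) + ½(3W̃^a − W̃^b). Then E^{2,1} − E^{1,0} ≤ −δt (M_u ⟪D μ_u, μ_u⟫ + M_v ⟪D μ_v, μ_v⟫). -/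
/-!
Pairing the first scheme equation with `μ_u` and the third with `μ_v` turns the dissipation
`-δt (M_u ⟪D μ_u, μ_u⟫ + M_v ⟪D μ_v, μ_v⟫)` into `½ (⟪μ_u, 3u² - 4u¹ + u⁰⟫ + ⟪μ_v, 3v² - 4v¹ + v⁰⟫)`;
substituting the chemical potentials, the `η`-terms are exactly `½ (3W̃² - 4W̃¹ + W̃⁰)` by the
Lagrange-multiplier equation. Every remaining term is a multiple of `⟪B x², 3x² - 4x¹ + x⁰⟫`
for a positive operator `B` (`D`, the identity, or `N` after shifting by `c`), and the
G-stability identity of BDF2 writes twice this as the increment of the two-level energy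
`⟪B x, x⟫ + ⟪B (2x - y), 2x - y⟫` plus the nonnegative defect `⟪B (x² - 2x¹ + x⁰), x² - 2x¹ + x⁰⟫`.
-/

open scoped RealInnerProductSpace

section

variable {H : Type*} [NormedAddCommGroup H] [InnerProductSpace ℝ H]

theorem LinearMap.IsSymmetric.bdf2_identity {B : H →ₗ[ℝ] H} (hB : B.IsSymmetric) (x₂ x₁ x₀ : H) :
    (⟪B x₂, x₂⟫ + ⟪B ((2 : ℝ) • x₂ - x₁), (2 : ℝ) • x₂ - x₁⟫)
        - (⟪B x₁, x₁⟫ + ⟪B ((2 : ℝ) • x₁ - x₀), (2 : ℝ) • x₁ - x₀⟫)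
        + ⟪B (x₂ - (2 : ℝ) • x₁ + x₀), x₂ - (2 : ℝ) • x₁ + x₀⟫
      = 2 * ⟪B x₂, (3 : ℝ) • x₂ - (4 : ℝ) • x₁ + x₀⟫ := by
  have hB' : ∀ x y : H, ⟪B x, y⟫ = ⟪B y, x⟫ := fun x y =>
    (hB x y).trans (real_inner_comm _ _)
  simp only [map_sub, map_add, map_smul, inner_sub_left, inner_sub_right, inner_add_left,
    inner_add_right, real_inner_smul_left, real_inner_smul_right]
  linarith [hB' x₂ x₁, hB' x₂ x₀, hB' x₁ x₀]

theorem LinearMap.IsPositive.bdf2_energy_sub_le {B : H →ₗ[ℝ] H} (hB : B.IsPositive)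
    (x₂ x₁ x₀ : H) :
    (⟪B x₂, x₂⟫ + ⟪B ((2 : ℝ) • x₂ - x₁), (2 : ℝ) • x₂ - x₁⟫)
        - (⟪B x₁, x₁⟫ + ⟪B ((2 : ℝ) • x₁ - x₀), (2 : ℝ) • x₁ - x₀⟫)
      ≤ 2 * ⟪B x₂, (3 : ℝ) • x₂ - (4 : ℝ) • x₁ + x₀⟫ := by
  rw [← hB.isSymmetric.bdf2_identity]
  linarith [hB.inner_nonneg_left (x₂ - (2 : ℝ) • x₁ + x₀)]

theorem LinearMap.IsPositive.bdf2_shifted_energy_sub_le {B : H →ₗ[ℝ] H} (hB : B.IsPositive)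
    (x₂ x₁ x₀ c : H) :
    (⟪B (x₂ - c), x₂ - c⟫ + ⟪B ((2 : ℝ) • x₂ - x₁ - c), (2 : ℝ) • x₂ - x₁ - c⟫)
        - (⟪B (x₁ - c), x₁ - c⟫ + ⟪B ((2 : ℝ) • x₁ - x₀ - c), (2 : ℝ) • x₁ - x₀ - c⟫)
      ≤ 2 * ⟪B (x₂ - c), (3 : ℝ) • x₂ - (4 : ℝ) • x₁ + x₀⟫ := by
  have shift : ∀ x y : H, (2 : ℝ) • (x - c) - (y - c) = (2 : ℝ) • x - y - c := by
    intro x y; module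
  have hres : (3 : ℝ) • (x₂ - c) - (4 : ℝ) • (x₁ - c) + (x₀ - c)
      = (3 : ℝ) • x₂ - (4 : ℝ) • x₁ + x₀ := by module
  simpa only [shift, hres] using hB.bdf2_energy_sub_le (x₂ - c) (x₁ - c) (x₀ - c)

theorem norm_sq_bdf2_energy_sub_le (x₂ x₁ x₀ : H) :
    (‖x₂‖ ^ 2 + ‖(2 : ℝ) • x₂ - x₁‖ ^ 2) - (‖x₁‖ ^ 2 + ‖(2 : ℝ) • x₁ - x₀‖ ^ 2)
      ≤ 2 * ⟪x₂, (3 : ℝ) • x₂ - (4 : ℝ) • x₁ + x₀⟫ := by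
  simpa only [LinearMap.id_apply, real_inner_self_eq_norm_sq]
    using (LinearMap.isPositive_id (E := H)).bdf2_energy_sub_le x₂ x₁ x₀

end

theorem coupled_stabilized_bdf2_energy_stability_general
    {H : Type*} [NormedAddCommGroup H] [InnerProductSpace ℝ H]
    (D N : H →ₗ[ℝ] H)
    (hD : ∀ x y : H, ⟪D x, y⟫ = ⟪x, D y⟫) (hN : ∀ x y : H, ⟪N x, y⟫ = ⟪x, N y⟫)
    (hDpos : ∀ x : H, 0 ≤ ⟪D x, x⟫) (hNpos : ∀ x : H, 0 ≤ ⟪N x, x⟫)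
    (δt Mu Mv εu εv σ Su Sv : ℝ)
    (hσ : 0 ≤ σ) (hSu : 0 ≤ Su) (hSv : 0 ≤ Sv)
    (c : H)
    (u0 u1 u2 v0 v1 v2 μu μv wu wv : H) (η W0 W1 W2 : ℝ)
    (h1 : (3 : ℝ) • u2 - (4 : ℝ) • u1 + u0 = -((2 * δt * Mu) • D μu))
    (h2 : μu = εu ^ 2 • D u2 + Su • u2 + η • wu)
    (h3 : (3 : ℝ) • v2 - (4 : ℝ) • v1 + v0 = -((2 * δt * Mv) • D μv))
    (h4 : μv = εv ^ 2 • D v2 + Sv • v2 + η • wv + σ • N (v2 - c))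
    (h5 : 3 * W2 - 4 * W1 + W0
      = η * (⟪wu, (3 : ℝ) • u2 - (4 : ℝ) • u1 + u0⟫
           + ⟪wv, (3 : ℝ) • v2 - (4 : ℝ) • v1 + v0⟫))
    (E : H → H → H → H → ℝ → ℝ → ℝ)
    (hE : ∀ (ua ub va vb : H) (Wa Wb : ℝ), E ua ub va vb Wa Wb
      = εu ^ 2 / 4 * (⟪D ua, ua⟫ + ⟪D ((2 : ℝ) • ua - ub), (2 : ℝ) • ua - ub⟫)
        + Su / 4 * (‖ua‖ ^ 2 + ‖(2 : ℝ) • ua - ub‖ ^ 2)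
        + εv ^ 2 / 4 * (⟪D va, va⟫ + ⟪D ((2 : ℝ) • va - vb), (2 : ℝ) • va - vb⟫)
        + Sv / 4 * (‖va‖ ^ 2 + ‖(2 : ℝ) • va - vb‖ ^ 2)
        + σ / 4 * (⟪N (va - c), va - c⟫
                 + ⟪N ((2 : ℝ) • va - vb - c), (2 : ℝ) • va - vb - c⟫)
        + (1 / 2 : ℝ) * (3 * Wa - Wb)) :
    E u2 u1 v2 v1 W2 W1 - E u1 u0 v1 v0 W1 W0
      ≤ -(δt * (Mu * ⟪D μu, μu⟫ + Mv * ⟪D μv, μv⟫)) := by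
  set ru := (3 : ℝ) • u2 - (4 : ℝ) • u1 + u0
  set rv := (3 : ℝ) • v2 - (4 : ℝ) • v1 + v0
  have hDp : D.IsPositive := D.isPositive_iff.2 ⟨hD, hDpos⟩
  have hNp : N.IsPositive := N.isPositive_iff.2 ⟨hN, hNpos⟩
  have dissip_u : ⟪μu, ru⟫ = -(2 * δt * Mu) * ⟪D μu, μu⟫ := by
    rw [h1, inner_neg_right, real_inner_smul_right, real_inner_comm]; ring
  have dissip_v : ⟪μv, rv⟫ = -(2 * δt * Mv) * ⟪D μv, μv⟫ := by
    rw [h3, inner_neg_right, real_inner_smul_right, real_inner_comm]; ring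
  have pair_u : ⟪μu, ru⟫ = εu ^ 2 * ⟪D u2, ru⟫ + Su * ⟪u2, ru⟫ + η * ⟪wu, ru⟫ := by
    rw [h2]; simp only [inner_add_left, real_inner_smul_left]
  have pair_v : ⟪μv, rv⟫ = εv ^ 2 * ⟪D v2, rv⟫ + Sv * ⟪v2, rv⟫ + η * ⟪wv, rv⟫
      + σ * ⟪N (v2 - c), rv⟫ := by
    rw [h4]; simp only [inner_add_left, real_inner_smul_left]
  rw [hE, hE]
  linear_combination (εu ^ 2 / 4) * hDp.bdf2_energy_sub_le u2 u1 u0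
    + (Su / 4) * norm_sq_bdf2_energy_sub_le u2 u1 u0
    + (εv ^ 2 / 4) * hDp.bdf2_energy_sub_le v2 v1 v0
    + (Sv / 4) * norm_sq_bdf2_energy_sub_le v2 v1 v0
    + (σ / 4) * hNp.bdf2_shifted_energy_sub_le v2 v1 v0 c
    + (1 / 2 : ℝ) * (h5 + dissip_u + dissip_v - pair_u - pair_v)

/-- Unconditional energy stability of the stabilized BDF2 Lagrange-multiplier scheme for the
coupled non-local Cahn–Hilliard (block copolymer) system. -/
theorem coupled_stabilized_bdf2_energy_stability
    {H : Type*} [NormedAddCommGroup H] [InnerProductSpace ℝ H]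
    (D N : H →ₗ[ℝ] H)
    (hD : ∀ x y : H, ⟪D x, y⟫ = ⟪x, D y⟫) (hN : ∀ x y : H, ⟪N x, y⟫ = ⟪x, N y⟫)
    (hDpos : ∀ x : H, 0 ≤ ⟪D x, x⟫) (hNpos : ∀ x : H, 0 ≤ ⟪N x, x⟫)
    (δt Mu Mv εu εv σ Su Sv : ℝ) (hδt : 0 < δt) (hMu : 0 < Mu) (hMv : 0 < Mv)
    (hσ : 0 ≤ σ) (hSu : 0 ≤ Su) (hSv : 0 ≤ Sv)
    (c : H)
    (u0 u1 u2 v0 v1 v2 μu μv wu wv : H) (η W0 W1 W2 : ℝ)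
    (h1 : (3 : ℝ) • u2 - (4 : ℝ) • u1 + u0 = -((2 * δt * Mu) • D μu))
    (h2 : μu = εu ^ 2 • D u2 + Su • u2 + η • wu)
    (h3 : (3 : ℝ) • v2 - (4 : ℝ) • v1 + v0 = -((2 * δt * Mv) • D μv))
    (h4 : μv = εv ^ 2 • D v2 + Sv • v2 + η • wv + σ • N (v2 - c))
    (h5 : 3 * W2 - 4 * W1 + W0
      = η * (⟪wu, (3 : ℝ) • u2 - (4 : ℝ) • u1 + u0⟫
           + ⟪wv, (3 : ℝ) • v2 - (4 : ℝ) • v1 + v0⟫))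
    (E : H → H → H → H → ℝ → ℝ → ℝ)
    (hE : ∀ (ua ub va vb : H) (Wa Wb : ℝ), E ua ub va vb Wa Wb
      = εu ^ 2 / 4 * (⟪D ua, ua⟫ + ⟪D ((2 : ℝ) • ua - ub), (2 : ℝ) • ua - ub⟫)
        + Su / 4 * (‖ua‖ ^ 2 + ‖(2 : ℝ) • ua - ub‖ ^ 2)
        + εv ^ 2 / 4 * (⟪D va, va⟫ + ⟪D ((2 : ℝ) • va - vb), (2 : ℝ) • va - vb⟫)
        + Sv / 4 * (‖va‖ ^ 2 + ‖(2 : ℝ) • va - vb‖ ^ 2)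
        + σ / 4 * (⟪N (va - c), va - c⟫
                 + ⟪N ((2 : ℝ) • va - vb - c), (2 : ℝ) • va - vb - c⟫)
        + (1 / 2 : ℝ) * (3 * Wa - Wb)) :
    E u2 u1 v2 v1 W2 W1 - E u1 u0 v1 v0 W1 W0
      ≤ -(δt * (Mu * ⟪D μu, μu⟫ + Mv * ⟪D μv, μv⟫)) :=
  coupled_stabilized_bdf2_energy_stability_general D N hD hN hDpos hNpos δt Mu Mv εu εv σ Su Sv hσ
    hSu hSv c u0 u1 u2 v0 v1 v2 μu μv wu wv η W0 W1 W2 h1 h2 h3 h4 h5 E hE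
end

section
/- Let H be a real inner product space and let D, N : H → H be symmetric linear maps (⟪D x, y⟫ = ⟪x, D y⟫ and ⟪N x, y⟫ = ⟪x, N y⟫ for all x, y). Let δt > 0, M_u, M_v > 0, ε_u, ε_v ∈ ℝ, σ ∈ ℝ, S_u, S_v ∈ ℝ, and c ∈ H. Suppose u⁰, u¹, v⁰, v¹, μ_u, μ_v, w_u, w_v ∈ H and η, W̃⁰, W̃¹ ∈ ℝ satisfy the stabilized Crank–Nicolson scheme with step δt: (i) u¹ − u⁰ = −δt M_u • D μ_u; (ii) μ_u = ε_u² • D(½(u¹+u⁰)) + S_u • (½(u¹+u⁰)) + η • w_u; (iii) v¹ − v⁰ = −δt M_v • D μ_v; (iv) μ_v = ε_v² • D(½(v¹+v⁰)) + S_v • (½(v¹+v⁰)) + η • w_v + σ • N(½(v¹+v⁰) − c); (v) W̃¹ − W̃⁰ = η (⟪w_u, u¹ − u⁰⟫ + ⟪w_v, v¹ − v⁰⟫). For i ∈ {0,1} define Eⁱ = (ε_u²/2)⟪D uⁱ, uⁱ⟫ + (S_u/2)‖uⁱ‖² + (ε_v²/2)⟪D vⁱ, vⁱ⟫ + (S_v/2)‖vⁱ‖²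 + W̃ⁱ + (σ/2)⟪N(vⁱ − c), vⁱ − c⟫. Then E¹ − E⁰ = −δt (M_u ⟪D μ_u, μ_u⟫ + M_v ⟪D μ_v, μ_v⟫). -/
/-!
Crank–Nicolson differences of quadratic energies are exact: for a symmetric operator `T`,
`⟪T a, a⟫ - ⟪T b, b⟫ = 2 ⟪T m, a - b⟫` with `m` the midpoint of `a` and `b`. Applied to every
quadratic term of the energy, and combined with the update rule for `W`, this turns `E¹ - E⁰`
into `⟪μu, u¹ - u⁰⟫ + ⟪μv, v¹ - v⁰⟫`; the evolution equations (i) and (iii) then rewrite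
each pairing as `-δt M ⟪D μ, μ⟫`.
-/

open scoped RealInnerProductSpace

section

variable {H : Type*} [SeminormedAddCommGroup H] [InnerProductSpace ℝ H]

namespace LinearMap.IsSymmetric

theorem inner_map_self_sub_inner_map_self {T : H →ₗ[ℝ] H} (hT : T.IsSymmetric) (a b : H) :
    ⟪T a, a⟫ - ⟪T b, b⟫ = 2 * ⟪T ((1 / 2 : ℝ) • (a + b)), a - b⟫ := by
  have hswap : ⟪T a, b⟫ = ⟪T b, a⟫ := by rw [hT a b, real_inner_comm]
  simp only [map_smul, map_add, real_inner_smul_left, inner_add_left, inner_sub_right]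
  rw [hswap]
  ring

theorem inner_map_sub_self_sub_inner_map_sub_self {T : H →ₗ[ℝ] H} (hT : T.IsSymmetric)
    (a b c : H) :
    ⟪T (a - c), a - c⟫ - ⟪T (b - c), b - c⟫ = 2 * ⟪T ((1 / 2 : ℝ) • (a + b) - c), a - b⟫ := by
  have hmid : (1 / 2 : ℝ) • ((a - c) + (b - c)) = (1 / 2 : ℝ) • (a + b) - c := by module
  rw [hT.inner_map_self_sub_inner_map_self, hmid, sub_sub_sub_cancel_right]

end LinearMap.IsSymmetric

theorem norm_sq_sub_norm_sq_eq_two_mul_inner_midpoint (a b : H) :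
    ‖a‖ ^ 2 - ‖b‖ ^ 2 = 2 * ⟪(1 / 2 : ℝ) • (a + b), a - b⟫ := by
  simpa only [← real_inner_self_eq_norm_sq, LinearMap.id_apply] using
    LinearMap.IsSymmetric.id.inner_map_self_sub_inner_map_self a b

end

theorem coupled_cn_energy_law_general
    {H : Type*} [NormedAddCommGroup H] [InnerProductSpace ℝ H]
    (D N : H →ₗ[ℝ] H)
    (hD : ∀ x y : H, ⟪D x, y⟫ = ⟪x, D y⟫) (hN : ∀ x y : H, ⟪N x, y⟫ = ⟪x, N y⟫)
    (δt Mu Mv εu εv σ Su Sv : ℝ)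
    (c : H)
    (u0 u1 v0 v1 μu μv wu wv : H) (η W0 W1 : ℝ)
    (h1 : u1 - u0 = -((δt * Mu) • D μu))
    (h2 : μu = εu ^ 2 • D ((1 / 2 : ℝ) • (u1 + u0)) + Su • ((1 / 2 : ℝ) • (u1 + u0))
      + η • wu)
    (h3 : v1 - v0 = -((δt * Mv) • D μv))
    (h4 : μv = εv ^ 2 • D ((1 / 2 : ℝ) • (v1 + v0)) + Sv • ((1 / 2 : ℝ) • (v1 + v0))
      + η • wv + σ • N ((1 / 2 : ℝ) • (v1 + v0) - c))
    (h5 : W1 - W0 = η * (⟪wu, u1 - u0⟫ + ⟪wv, v1 - v0⟫))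
    (E : H → H → ℝ → ℝ)
    (hE : ∀ (u v : H) (W : ℝ), E u v W
      = εu ^ 2 / 2 * ⟪D u, u⟫ + Su / 2 * ‖u‖ ^ 2
        + εv ^ 2 / 2 * ⟪D v, v⟫ + Sv / 2 * ‖v‖ ^ 2
        + W + σ / 2 * ⟪N (v - c), v - c⟫) :
    E u1 v1 W1 - E u0 v0 W0
      = -(δt * (Mu * ⟪D μu, μu⟫ + Mv * ⟪D μv, μv⟫)) := by
  have hDsymm : D.IsSymmetric := hD
  have hNsymm : N.IsSymmetric := hN
  have hμu : ⟪μu, u1 - u0⟫ = εu ^ 2 * ⟪D ((1 / 2 : ℝ) • (u1 + u0)), u1 - u0⟫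
      + Su * ⟪(1 / 2 : ℝ) • (u1 + u0), u1 - u0⟫ + η * ⟪wu, u1 - u0⟫ := by
    rw [h2]
    simp only [inner_add_left, real_inner_smul_left]
  have hμv : ⟪μv, v1 - v0⟫ = εv ^ 2 * ⟪D ((1 / 2 : ℝ) • (v1 + v0)), v1 - v0⟫
      + Sv * ⟪(1 / 2 : ℝ) • (v1 + v0), v1 - v0⟫ + η * ⟪wv, v1 - v0⟫
      + σ * ⟪N ((1 / 2 : ℝ) • (v1 + v0) - c), v1 - v0⟫ := by
    rw [h4]
    simp only [inner_add_left, real_inner_smul_left]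
  have henergy : E u1 v1 W1 - E u0 v0 W0 = ⟪μu, u1 - u0⟫ + ⟪μv, v1 - v0⟫ := by
    rw [hE, hE, hμu, hμv]
    linear_combination (εu ^ 2 / 2) * hDsymm.inner_map_self_sub_inner_map_self u1 u0
      + (Su / 2) * norm_sq_sub_norm_sq_eq_two_mul_inner_midpoint u1 u0
      + (εv ^ 2 / 2) * hDsymm.inner_map_self_sub_inner_map_self v1 v0
      + (Sv / 2) * norm_sq_sub_norm_sq_eq_two_mul_inner_midpoint v1 v0
      + (σ / 2) * hNsymm.inner_map_sub_self_sub_inner_map_sub_self v1 v0 c + h5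
  rw [henergy, h1, h3, inner_neg_right, inner_neg_right, real_inner_smul_right,
    real_inner_smul_right, real_inner_comm μu, real_inner_comm μv]
  ring

/-- Discrete energy law for the stabilized Crank–Nicolson Lagrange-multiplier scheme with
(possibly variable) time step, for the coupled non-local Cahn–Hilliard system. -/
theorem coupled_cn_energy_law
    {H : Type*} [NormedAddCommGroup H] [InnerProductSpace ℝ H]
    (D N : H →ₗ[ℝ] H)
    (hD : ∀ x y : H, ⟪D x, y⟫ = ⟪x, D y⟫) (hN : ∀ x y : H, ⟪N x, y⟫ = ⟪x, N y⟫)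
    (δt Mu Mv εu εv σ Su Sv : ℝ) (hδt : 0 < δt) (hMu : 0 < Mu) (hMv : 0 < Mv)
    (c : H)
    (u0 u1 v0 v1 μu μv wu wv : H) (η W0 W1 : ℝ)
    (h1 : u1 - u0 = -((δt * Mu) • D μu))
    (h2 : μu = εu ^ 2 • D ((1 / 2 : ℝ) • (u1 + u0)) + Su • ((1 / 2 : ℝ) • (u1 + u0))
      + η • wu)
    (h3 : v1 - v0 = -((δt * Mv) • D μv))
    (h4 : μv = εv ^ 2 • D ((1 / 2 : ℝ) • (v1 + v0)) + Sv • ((1 / 2 : ℝ) • (v1 + v0))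
      + η • wv + σ • N ((1 / 2 : ℝ) • (v1 + v0) - c))
    (h5 : W1 - W0 = η * (⟪wu, u1 - u0⟫ + ⟪wv, v1 - v0⟫))
    (E : H → H → ℝ → ℝ)
    (hE : ∀ (u v : H) (W : ℝ), E u v W
      = εu ^ 2 / 2 * ⟪D u, u⟫ + Su / 2 * ‖u‖ ^ 2
        + εv ^ 2 / 2 * ⟪D v, v⟫ + Sv / 2 * ‖v‖ ^ 2
        + W + σ / 2 * ⟪N (v - c), v - c⟫) :
    E u1 v1 W1 - E u0 v0 W0
      = -(δt * (Mu * ⟪D μu, μu⟫ + Mv * ⟪D μv, μv⟫)) :=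
  coupled_cn_energy_law_general D N hD hN δt Mu Mv εu εv σ Su Sv c u0 u1 v0 v1 μu μv wu wv η W0 W1
    h1 h2 h3 h4 h5 E hE
end

section
/- Let H be a real inner product space, let A : H → H be a symmetric positive semidefinite linear map (⟪A x, y⟫ = ⟪x, A y⟫ and ⟪A x, x⟫ ≥ 0 for all x, y), let M > 0 and δt > 0. Suppose φ⁰, φ¹, φ², w ∈ H and η, a⁰, a¹, a² ∈ ℝ satisfy: (i) 3φ² − 4φ¹ + φ⁰ = −2δt M • (A φ² + η • w); (ii) 3a² − 4a¹ + a⁰ = η · ⟪w, 3φ² − 4φ¹ + φ⁰⟫. Define Ẽ(φ, ψ, a, a′) = ¼(⟪A φ, φ⟫ + ⟪A(2φ − ψ), 2φ − ψ⟫) + ½(3a − a′). Then, with μ = A φ² + η • w, one has Ẽ(φ², φ¹, a², a¹) − Ẽ(φ¹, φ⁰, a¹, a⁰) = −δt M ‖μ‖² − ¼⟪A(φ² − 2φ¹ + φ⁰), φ² − 2φ¹ + φ⁰⟫; in particular Ẽ(φ², φ¹, a², a¹) ≤ Ẽ(φ¹, φ⁰, a¹, a⁰), i.e. the scheme is unconditionally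 energy stable. -/
/-!
Pair (i) with `μ = A φ² + η w`: the left side becomes `-2 δt M ‖μ‖²`. On the right, (ii) turns
`η ⟪w, 3φ² - 4φ¹ + φ⁰⟫` into the increment of the scalar part of `Ẽ`, and for symmetric `A`,
with `q v = ⟪A v, v⟫`, the identity
`2⟪A x, 3x - 4y + z⟫ = q x + q (2x - y) - q y - q (2y - z) + q (x - 2y + z)`
turns `⟪A φ², 3φ² - 4φ¹ + φ⁰⟫` into the increment of its quadratic part plus the numerical
dissipation `q (φ² - 2φ¹ + φ⁰) ≥ 0`.
-/

open scoped RealInnerProductSpace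

section BDF2

variable {H : Type*} [NormedAddCommGroup H] [InnerProductSpace ℝ H]

theorem LinearMap.IsSymmetric.two_mul_inner_bdf2 {T : H →ₗ[ℝ] H} (hT : T.IsSymmetric)
    (x y z : H) :
    2 * ⟪T x, (3 : ℝ) • x - (4 : ℝ) • y + z⟫
      = ⟪T x, x⟫ + ⟪T ((2 : ℝ) • x - y), (2 : ℝ) • x - y⟫ - ⟪T y, y⟫
        - ⟪T ((2 : ℝ) • y - z), (2 : ℝ) • y - z⟫
        + ⟪T (x - (2 : ℝ) • y + z), x - (2 : ℝ) • y + z⟫ := by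
  have hyx : ⟪T y, x⟫ = ⟪T x, y⟫ := by rw [hT, real_inner_comm]
  have hzx : ⟪T z, x⟫ = ⟪T x, z⟫ := by rw [hT, real_inner_comm]
  have hzy : ⟪T z, y⟫ = ⟪T y, z⟫ := by rw [hT, real_inner_comm]
  simp only [map_sub, map_add, map_smul, inner_sub_left, inner_sub_right, inner_add_left,
    inner_add_right, real_inner_smul_left, real_inner_smul_right, hyx, hzx, hzy]
  ring

noncomputable def bdf2Energy (A : H →ₗ[ℝ] H) (φ ψ : H) (a a' : ℝ) : ℝ :=
  (1 / 4 : ℝ) * (⟪A φ, φ⟫ + ⟪A ((2 : ℝ) • φ - ψ), (2 : ℝ) • φ - ψ⟫) + (1 / 2 : ℝ) * (3 * a - a')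

section Scheme

variable {A : H →ₗ[ℝ] H} {M δt η a0 a1 a2 : ℝ} {φ0 φ1 φ2 w : H}

theorem inner_bdf2_of_scheme
    (h1 : (3 : ℝ) • φ2 - (4 : ℝ) • φ1 + φ0 = -((2 * δt * M) • (A φ2 + η • w)))
    (h2 : 3 * a2 - 4 * a1 + a0 = η * ⟪w, (3 : ℝ) • φ2 - (4 : ℝ) • φ1 + φ0⟫) :
    ⟪A φ2, (3 : ℝ) • φ2 - (4 : ℝ) • φ1 + φ0⟫
      = -(2 * δt * M) * ‖A φ2 + η • w‖ ^ 2 - (3 * a2 - 4 * a1 + a0) := by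
  have hμ : ⟪A φ2 + η • w, (3 : ℝ) • φ2 - (4 : ℝ) • φ1 + φ0⟫
      = -(2 * δt * M) * ‖A φ2 + η • w‖ ^ 2 := by
    rw [h1, ← neg_smul, real_inner_smul_right, real_inner_self_eq_norm_sq]
  rw [inner_add_left, real_inner_smul_left] at hμ
  linarith

theorem bdf2Energy_sub_of_scheme (hA : A.IsSymmetric)
    (h1 : (3 : ℝ) • φ2 - (4 : ℝ) • φ1 + φ0 = -((2 * δt * M) • (A φ2 + η • w)))
    (h2 : 3 * a2 - 4 * a1 + a0 = η * ⟪w, (3 : ℝ) • φ2 - (4 : ℝ) • φ1 + φ0⟫) :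
    bdf2Energy A φ2 φ1 a2 a1 - bdf2Energy A φ1 φ0 a1 a0
      = -(δt * M * ‖A φ2 + η • w‖ ^ 2)
        - (1 / 4 : ℝ) * ⟪A (φ2 - (2 : ℝ) • φ1 + φ0), φ2 - (2 : ℝ) • φ1 + φ0⟫ := by
  have hbdf2 := hA.two_mul_inner_bdf2 φ2 φ1 φ0
  rw [inner_bdf2_of_scheme h1 h2] at hbdf2
  simp only [bdf2Energy]
  linarith

end Scheme

end BDF2

/-- Unconditional energy stability of the BDF2 Lagrange-multiplier scheme for the
MBE model without slope selection. -/
theorem mbe_bdf2_energy_stability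
    {H : Type*} [NormedAddCommGroup H] [InnerProductSpace ℝ H]
    (A : H →ₗ[ℝ] H) (hA : ∀ x y : H, ⟪A x, y⟫ = ⟪x, A y⟫)
    (hApos : ∀ x : H, 0 ≤ ⟪A x, x⟫)
    (M δt : ℝ) (hM : 0 < M) (hδt : 0 < δt)
    (φ0 φ1 φ2 w : H) (η a0 a1 a2 : ℝ)
    (h1 : (3 : ℝ) • φ2 - (4 : ℝ) • φ1 + φ0 = -((2 * δt * M) • (A φ2 + η • w)))
    (h2 : 3 * a2 - 4 * a1 + a0 = η * ⟪w, (3 : ℝ) • φ2 - (4 : ℝ) • φ1 + φ0⟫)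
    (Etilde : H → H → ℝ → ℝ → ℝ)
    (hE : ∀ (φ ψ : H) (a a' : ℝ), Etilde φ ψ a a'
      = (1 / 4 : ℝ) * (⟪A φ, φ⟫ + ⟪A ((2 : ℝ) • φ - ψ), (2 : ℝ) • φ - ψ⟫)
        + (1 / 2 : ℝ) * (3 * a - a'))
    (μ : H) (hμ : μ = A φ2 + η • w) :
    (Etilde φ2 φ1 a2 a1 - Etilde φ1 φ0 a1 a0
        = -(δt * M * ‖μ‖ ^ 2)
          - (1 / 4 : ℝ) * ⟪A (φ2 - (2 : ℝ) • φ1 + φ0), φ2 - (2 : ℝ) • φ1 + φ0⟫)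
      ∧ Etilde φ2 φ1 a2 a1 ≤ Etilde φ1 φ0 a1 a0 := by
  have hEtilde : Etilde = bdf2Energy A := by
    funext φ ψ a a'
    exact hE φ ψ a a'
  have hdiff := bdf2Energy_sub_of_scheme hA h1 h2
  rw [← hμ, ← hEtilde] at hdiff
  refine ⟨hdiff, ?_⟩
  have hdissipation := hApos (φ2 - (2 : ℝ) • φ1 + φ0)
  have hmobility : 0 ≤ δt * M * ‖μ‖ ^ 2 := by positivity
  linarith
end

section
/- Let H be a real inner product space and let D, N : H → H be continuous symmetric linear maps (⟪D x, y⟫ = ⟪x, D y⟫ and ⟪N x, y⟫ = ⟪x, N y⟫ for all x, y). Let M_u, M_v, ε_u, ε_v, σ ∈ ℝ and c ∈ H. Suppose u, v : ℝ → H and W : ℝ → ℝ are differentiable, w_u, w_v : ℝ → H and η : ℝ → ℝ are arbitrary, and μ_u, μ_v : ℝ → H satisfy for all t: (i) u′(t) = −M_u • D(μ_u(t)); (ii) μ_u(t) = ε_u² • D(u(t)) + η(t) • w_u(t); (iii) v′(t) = −M_v • D(μ_v(t)); (iv) μ_v(t) = ε_v² • D(v(t)) + η(t) • w_v(t) + σ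 • N(v(t) − c); (v) W′(t) = η(t)(⟪w_u(t), u′(t)⟫ + ⟪w_v(t), v′(t)⟫). Then the energy E(t) = (ε_u²/2)⟪D u(t), u(t)⟫ + (ε_v²/2)⟪D v(t), v(t)⟫ + W(t) + (σ/2)⟪N(v(t) − c), v(t) − c⟫ is differentiable with E′(t) = −M_u ⟪D μ_u(t), μ_u(t)⟫ − M_v ⟪D μ_v(t), μ_v(t)⟫ for all t. -/
open scoped RealInnerProductSpace

/-!
Differentiating the energy term by term, symmetry of `D` and `N` turns each quadratic term into
twice a pairing with the velocity, so that `E' = ⟪μu, u'⟫ + ⟪μv, v'⟫` by the definitions of the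
chemical potentials and the chain rule assumed for `W`. Inserting `u' = -Mu • D μu` and
`v' = -Mv • D μv` gives the dissipation.
-/

section

variable {E : Type*} [NormedAddCommGroup E] [InnerProductSpace ℝ E]

theorem HasDerivAt.inner_apply_self_of_isSymmetric {A : E →L[ℝ] E}
    (hA : (A : E →ₗ[ℝ] E).IsSymmetric) {f : ℝ → E} {f' : E} {t : ℝ}
    (hf : HasDerivAt f f' t) :
    HasDerivAt (fun s => ⟪A (f s), f s⟫) (2 * ⟪A (f t), f'⟫) t := by
  refine ((A.hasFDerivAt.comp_hasDerivAt t hf).inner ℝ hf).congr_deriv ?_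
  have hsymm : ⟪A f', f t⟫ = ⟪A (f t), f'⟫ := (hA f' (f t)).trans (real_inner_comm _ _)
  rw [Function.comp_apply, hsymm]
  ring

theorem inner_neg_smul_apply (A : E →L[ℝ] E) (M : ℝ) (μ : E) :
    ⟪μ, -(M • A μ)⟫ = -(M * ⟪A μ, μ⟫) := by
  rw [inner_neg_right, real_inner_smul_right, real_inner_comm]

end

/-- Energy dissipation law for the continuous Lagrange-multiplier reformulation of the
coupled non-local Cahn–Hilliard block copolymer system. -/
theorem coupled_continuous_energy_law
    {H : Type*} [NormedAddCommGroup H] [InnerProductSpace ℝ H]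
    (D N : H →L[ℝ] H)
    (hD : ∀ x y : H, ⟪D x, y⟫ = ⟪x, D y⟫) (hN : ∀ x y : H, ⟪N x, y⟫ = ⟪x, N y⟫)
    (Mu Mv εu εv σ : ℝ) (c : H)
    (u v : ℝ → H) (W : ℝ → ℝ)
    (hu : Differentiable ℝ u) (hv : Differentiable ℝ v) (hW : Differentiable ℝ W)
    (wu wv : ℝ → H) (η : ℝ → ℝ) (μu μv : ℝ → H)
    (h1 : ∀ t, deriv u t = -(Mu • D (μu t)))
    (h2 : ∀ t, μu t = εu ^ 2 • D (u t) + η t • wu t)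
    (h3 : ∀ t, deriv v t = -(Mv • D (μv t)))
    (h4 : ∀ t, μv t = εv ^ 2 • D (v t) + η t • wv t + σ • N (v t - c))
    (h5 : ∀ t, deriv W t = η t * (⟪wu t, deriv u t⟫ + ⟪wv t, deriv v t⟫)) :
    ∀ t, HasDerivAt
      (fun s => εu ^ 2 / 2 * ⟪D (u s), u s⟫ + εv ^ 2 / 2 * ⟪D (v s), v s⟫
        + W s + σ / 2 * ⟪N (v s - c), v s - c⟫)
      (-(Mu * ⟪D (μu t), μu t⟫) - Mv * ⟪D (μv t), μv t⟫) t := by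
  intro t
  have hut := (hu t).hasDerivAt
  have hvt := (hv t).hasDerivAt
  have hE := ((((hut.inner_apply_self_of_isSymmetric hD).const_mul (εu ^ 2 / 2)).add
    ((hvt.inner_apply_self_of_isSymmetric hD).const_mul (εv ^ 2 / 2))).add (hW t).hasDerivAt).add
    (((hvt.sub_const c).inner_apply_self_of_isSymmetric hN).const_mul (σ / 2))
  refine hE.congr_deriv ?_
  have hμu : ⟪μu t, deriv u t⟫ = -(Mu * ⟪D (μu t), μu t⟫) := by
    rw [h1 t, inner_neg_smul_apply]
  have hμv : ⟪μv t, deriv v t⟫ = -(Mv * ⟪D (μv t), μv t⟫) := by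
    rw [h3 t, inner_neg_smul_apply]
  have hμu_expand : ⟪μu t, deriv u t⟫
      = εu ^ 2 * ⟪D (u t), deriv u t⟫ + η t * ⟪wu t, deriv u t⟫ := by
    rw [h2 t, inner_add_left, real_inner_smul_left, real_inner_smul_left]
  have hμv_expand : ⟪μv t, deriv v t⟫ = εv ^ 2 * ⟪D (v t), deriv v t⟫
      + η t * ⟪wv t, deriv v t⟫ + σ * ⟪N (v t - c), deriv v t⟫ := by
    rw [h4 t, inner_add_left, inner_add_left, real_inner_smul_left, real_inner_smul_left,
      real_inner_smul_left]
  rw [h5 t]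
  linear_combination hμu - hμu_expand + hμv - hμv_expand
end
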